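/- arXiv:1210.7549 — 2 statements merged into one kernel-verified Lean document; each statement's English description precedes it below -/
import Mathlib

section
/- Let X be a building of type (W,S) and let σ and σ' be panels of X. If there exist two chambers x, y ∈ σ' with proj_σ(x) ≠ proj_σ(y), then σ and σ' are parallel. -/
noncomputable section

open scoped Classical

namespace RAB

variable {B W : Type*} [Group W] {M : CoxeterMatrix B}

/-- The Coxeter system `cs` is right-angled: the order `m(s,t)` of `s*t` is `2` or `∞`
(infinite order being encoded by `orderOf _ = 0`) for all distinct simple reflections. -/
def IsRightAngled (cs : CoxeterSystem M W) : Prop :=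
  ∀ i j : B, i ≠ j →
    orderOf (cs.simple i * cs.simple j) = 2 ∨ orderOf (cs.simple i * cs.simple j) = 0

/-- The graph on the simple system joining `i, j` whenever `m(s_i, s_j) ≠ 2`. -/
def coxeterGraph (cs : CoxeterSystem M W) : SimpleGraph B where
  Adj i j := i ≠ j ∧ orderOf (cs.simple i * cs.simple j) ≠ 2
  symm := ⟨by
    rintro i j ⟨hij, h2⟩
    refine ⟨hij.symm, fun h => h2 ?_⟩
    have hsc : SemiconjBy (cs.simple i) (cs.simple j * cs.simple i)
        (cs.simple i * cs.simple j) := by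
      unfold SemiconjBy
      group
    rw [← hsc.orderOf_eq (cs.simple i)]
    exact h⟩
  loopless := ⟨fun i h => h.1 rfl⟩

/-- `(W, S)` is irreducible: the graph on `S` joining `s, t` whenever `m(s,t) ≠ 2`
is connected. -/
def IsIrreducible (cs : CoxeterSystem M W) : Prop := (coxeterGraph cs).Connected

/-- `J⊥ = {i ∈ S \ J : m(i,j) = 2 for all j ∈ J}`. -/
def perp (cs : CoxeterSystem M W) (J : Set B) : Set B :=
  {i : B | i ∉ J ∧ ∀ j ∈ J, orderOf (cs.simple i * cs.simple j) = 2}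

/-- The Cayley graph of `W` with respect to the simple system, joining `u ≠ v`
whenever `u⁻¹ * v` is a simple reflection. -/
def cayleyGraph (cs : CoxeterSystem M W) : SimpleGraph W where
  Adj u v := u ≠ v ∧ u⁻¹ * v ∈ Set.range cs.simple
  symm := ⟨by
    rintro u v ⟨huv, i, hi⟩
    refine ⟨huv.symm, i, ?_⟩
    calc cs.simple i = (cs.simple i)⁻¹ := (cs.inv_simple i).symm
      _ = (u⁻¹ * v)⁻¹ := by rw [hi]
      _ = v⁻¹ * u := by group⟩
  loopless := ⟨fun u h => h.1 rfl⟩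

/-- A building of type `(W, S)`, where the Coxeter system with simple system `S`
indexed by `B` is `cs`: a nonempty set `C` of chambers together with a Weyl
distance `δ : C × C → W` satisfying the three building axioms. -/
structure Building (cs : CoxeterSystem M W) (C : Type*) where
  nonempty : Nonempty C
  δ : C → C → W
  delta_eq_one_iff : ∀ x y : C, δ x y = 1 ↔ x = y
  delta_mem_pair : ∀ (x y z : C) (i : B), δ y z = cs.simple i →
    δ x z = δ x y ∨ δ x z = δ x y * cs.simple i
  delta_eq_of_length : ∀ (x y z : C) (i : B), δ y z = cs.simple i →
    cs.length (δ x y * cs.simple i) = cs.length (δ x y) + 1 →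
    δ x z = δ x y * cs.simple i
  exists_delta : ∀ (x y : C) (i : B), ∃ z : C,
    δ y z = cs.simple i ∧ δ x z = δ x y * cs.simple i

namespace Building

variable {C : Type*} {cs : CoxeterSystem M W} (X : Building cs C)

/-- The gallery distance between two chambers. -/
def dist (x y : C) : ℕ := cs.length (X.δ x y)

/-- The residue of type `J` containing the chamber `c`. -/
def Res (J : Set B) (c : C) : Set C :=
  {x : C | X.δ c x ∈ Subgroup.closure (cs.simple '' J)}

/-- `R` is a residue of type `J`. -/
def IsResidueOfType (J : Set B) (R : Set C) : Prop := ∃ c : C, R = X.Res J c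

/-- `R` is a residue. -/
def IsResidue (R : Set C) : Prop := ∃ J : Set B, X.IsResidueOfType J R

/-- `R` is a panel, i.e. a residue of type `{i}` for some `i`. -/
def IsPanel (R : Set C) : Prop := ∃ i : B, X.IsResidueOfType {i} R

/-- `p` is *the* projection of the chamber `c` on the set `R`: the unique chamber
of `R` at minimal gallery distance from `c`. -/
def IsProj (R : Set C) (c p : C) : Prop :=
  p ∈ R ∧ ∀ x ∈ R, x ≠ p → X.dist c p < X.dist c x

/-- The projection of the chamber `c` on `R` (defaulting to `c` in degenerate
situations where no projection exists). -/
def proj (R : Set C) (c : C) : C :=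
  if h : ∃ p : C, X.IsProj R c p then h.choose else c

/-- The projection `proj_R(R') = {proj_R(x) : x ∈ R'}`. -/
def projSet (R R' : Set C) : Set C := X.proj R '' R'

/-- Two sets of chambers (typically residues) are parallel if they project onto
one another. -/
def Parallel (R R' : Set C) : Prop :=
  X.projSet R R' = R ∧ X.projSet R' R = R'

/-- The gallery distance from a chamber to a residue. -/
def distCR (c : C) (R : Set C) : ℕ := X.dist c (X.proj R c)

/-- The gallery distance between two residues. -/
def distRR (R R' : Set C) : ℕ := sInf ((fun x => X.distCR x R') '' R)

/-- The `J`-wing of the chamber `c`: the set of chambers whose projection to the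
`J`-residue of `c` is `c` itself. -/
def wing (J : Set B) (c : C) : Set C := {x : C | X.proj (X.Res J c) x = c}

/-- An apartment: a subset of the chambers in bijection with `W`, the bijection
transporting the Weyl distance to `(u, v) ↦ u⁻¹ * v`. -/
def IsApartment (A : Set C) : Prop :=
  ∃ f : W → C, Function.Injective f ∧ Set.range f = A ∧
    ∀ u v : W, X.δ (f u) (f v) = u⁻¹ * v

/-- The group of type-preserving automorphisms of the building: all permutations
of the chambers preserving the Weyl distance. -/
def autPlus : Subgroup (Equiv.Perm C) where
  carrier := {g : Equiv.Perm C | ∀ x y : C, X.δ (g x) (g y) = X.δ x y}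
  one_mem' := fun _ _ => rfl
  mul_mem' := by
    intro a b ha hb x y
    simp only [Equiv.Perm.mul_apply]
    rw [ha, hb]
  inv_mem' := by
    intro a ha x y
    have h := ha (a⁻¹ x) (a⁻¹ y)
    simpa using h.symm

/-- The subgroup `U_i(c)` of type-preserving automorphisms fixing the `i`-wing
of `c` pointwise. -/
def U (i : B) (c : C) : Subgroup (Equiv.Perm C) :=
  X.autPlus ⊓ fixingSubgroup (Equiv.Perm C) (X.wing {i} c)

/-- The subgroup `V_i(c)` of type-preserving automorphisms fixing the complement of
the `i`-wing of `c` pointwise. -/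
def V (i : B) (c : C) : Subgroup (Equiv.Perm C) :=
  X.autPlus ⊓ fixingSubgroup (Equiv.Perm C) (X.wing {i} c)ᶜ

/-- The building is thick: every panel has at least three chambers. -/
def Thick : Prop := ∀ R : Set C, X.IsPanel R →
  ∃ x ∈ R, ∃ y ∈ R, ∃ z ∈ R, x ≠ y ∧ x ≠ z ∧ y ≠ z

/-- The building is semi-regular: for each `i`, all panels of type `i` have the
same cardinality. -/
def SemiRegular : Prop := ∀ (i : B) (R R' : Set C),
  X.IsResidueOfType {i} R → X.IsResidueOfType {i} R' → Cardinal.mk R = Cardinal.mk R'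

/-- The building is locally finite: every panel is finite. -/
def LocallyFinite : Prop := ∀ R : Set C, X.IsPanel R → R.Finite

/-- The chamber graph of the building: two distinct chambers are joined whenever
their Weyl distance is a simple reflection. -/
def chamberGraph : SimpleGraph C where
  Adj x y := x ≠ y ∧ X.δ x y ∈ Set.range cs.simple ∧ X.δ y x ∈ Set.range cs.simple
  symm := ⟨by rintro x y ⟨h1, h2, h3⟩; exact ⟨h1.symm, h3, h2⟩⟩
  loopless := ⟨fun x h => h.1 rfl⟩

end Building

end RAB

/-!
Let `σ` have type `i`, `σ'` type `j`, and let `p, q` be the projections of `x, y` on `σ`.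
By the gate property, `δ(x, r) = δ(x, p) s_i` is one step longer than `δ(x, p)` for every
`r ∈ σ \ {p}`. As `x, y` are `j`-adjacent, `δ(x, q)` is `δ(y, q)` or `s_j δ(y, q)`; the
first is incompatible with these lengths, so `δ(x, q) = s_j δ(y, q)` and symmetrically
`δ(y, p) = s_j δ(x, p)`. Comparing lengths, `ℓ(s_j δ(x, p)) = ℓ(δ(x, p)) + 1`: thus `x` is
the projection of `p` on `σ'`, and each `r ∈ σ` is the projection of a `j`-neighbour of `x`.
Applied to `p, q ∈ σ`, whose projections `x ≠ y` on `σ'` differ, this gives the converse.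
-/

namespace RAB.Building

variable {B W C : Type*} [Group W] {M : CoxeterMatrix B} {cs : CoxeterSystem M W}
  (X : Building cs C)

theorem delta_self (x : C) : X.δ x x = 1 := (X.delta_eq_one_iff x x).2 rfl

theorem delta_symm_of_eq_simple {y z : C} {i : B} (h : X.δ y z = cs.simple i) :
    X.δ z y = cs.simple i := by
  rcases X.delta_mem_pair z y z i h with h1 | h1 <;> rw [X.delta_self] at h1
  · obtain rfl := (X.delta_eq_one_iff z y).1 h1.symm
    have := cs.length_simple i
    rw [← h, X.delta_self, cs.length_one] at this
    exact absurd this zero_ne_one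
  · exact (eq_inv_of_mul_eq_one_left h1.symm).trans (cs.inv_simple i)

theorem exists_delta_mul_simple (x y : C) (i : B) :
    ∃ z : C, X.δ x z = X.δ x y * cs.simple i ∧ X.δ z y = cs.simple i := by
  obtain ⟨z, hyz, hxz⟩ := X.exists_delta x y i
  exact ⟨z, hxz, X.delta_symm_of_eq_simple hyz⟩

theorem delta_eq_mul_of_length_add {x y z : C}
    (h : cs.length (X.δ x y * X.δ y z) = cs.length (X.δ x y) + cs.length (X.δ y z)) :
    X.δ x z = X.δ x y * X.δ y z := by
  induction hn : cs.length (X.δ y z) generalizing z with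
  | zero =>
    obtain rfl := (X.delta_eq_one_iff y z).1 (cs.length_eq_zero_iff.1 hn)
    rw [X.delta_self, mul_one]
  | succ n ih =>
    have hne : X.δ y z ≠ 1 := by rintro h1; simp [h1] at hn
    obtain ⟨i, hi⟩ := cs.exists_rightDescent_of_ne_one hne
    rw [cs.isRightDescent_iff, hn] at hi
    obtain ⟨z', hyz', hz'z⟩ := X.exists_delta_mul_simple y z i
    have hlen : cs.length (X.δ x y * X.δ y z * cs.simple i) = cs.length (X.δ x y) + n := by
      have hle := cs.length_mul_le (X.δ x y) (X.δ y z * cs.simple i)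
      rw [← mul_assoc] at hle
      have := cs.length_mul_simple (X.δ x y * X.δ y z) i
      omega
    have hxz' : X.δ x z' = X.δ x y * X.δ y z * cs.simple i := by
      rw [ih (by rw [hyz', ← mul_assoc, hlen]; omega) (by rw [hyz']; omega), hyz', mul_assoc]
    have hxz : X.δ x z = X.δ x z' * cs.simple i :=
      X.delta_eq_of_length x z' z i hz'z (by rw [hxz', cs.simple_mul_simple_cancel_right]; omega)
    rw [hxz, hxz', cs.simple_mul_simple_cancel_right]

theorem delta_swap (x y : C) : X.δ y x = (X.δ x y)⁻¹ := by
  induction hn : cs.length (X.δ x y) generalizing y with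
  | zero =>
    obtain rfl := (X.delta_eq_one_iff x y).1 (cs.length_eq_zero_iff.1 hn)
    rw [X.delta_self, inv_one]
  | succ n ih =>
    have hne : X.δ x y ≠ 1 := by rintro h1; simp [h1] at hn
    obtain ⟨i, hi⟩ := cs.exists_rightDescent_of_ne_one hne
    rw [cs.isRightDescent_iff, hn] at hi
    obtain ⟨z, hxz, hzy⟩ := X.exists_delta_mul_simple x y i
    have hzx : X.δ z x = cs.simple i * (X.δ x y)⁻¹ := by
      rw [ih z (by rw [hxz]; omega), hxz, mul_inv_rev, cs.inv_simple]
    have hyz := X.delta_symm_of_eq_simple hzy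
    have hlen : cs.length (cs.simple i * (X.δ x y)⁻¹) = n := by
      rw [← cs.inv_simple, ← mul_inv_rev, cs.length_inv]; omega
    have hyx : X.δ y x = X.δ y z * X.δ z x := X.delta_eq_mul_of_length_add (by
      rw [hyz, hzx, cs.simple_mul_simple_cancel_left, cs.length_simple, cs.length_inv, hlen]
      omega)
    rw [hyx, hyz, hzx, cs.simple_mul_simple_cancel_left]

theorem delta_mem_pair_left {x y z : C} {j : B} (h : X.δ x y = cs.simple j) :
    X.δ x z = X.δ y z ∨ X.δ x z = cs.simple j * X.δ y z := by
  have h' := X.delta_mem_pair z y x j (X.delta_symm_of_eq_simple h)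
  rw [X.delta_swap x z, X.delta_swap y z, ← cs.inv_simple j, ← mul_inv_rev] at h'
  simpa only [inv_inj, cs.inv_simple] using h'

theorem mem_closure_simple_singleton_iff {i : B} {w : W} :
    w ∈ Subgroup.closure (cs.simple '' {i}) ↔ w = 1 ∨ w = cs.simple i := by
  rw [Set.image_singleton, Subgroup.mem_closure_singleton]
  constructor
  · rintro ⟨n, rfl⟩
    rcases Int.even_or_odd' n with ⟨k, rfl | rfl⟩
    · left; rw [zpow_mul, zpow_two, cs.simple_mul_simple_self, one_zpow]
    · right; rw [zpow_add_one, zpow_mul, zpow_two, cs.simple_mul_simple_self, one_zpow, one_mul]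
  · rintro (rfl | rfl)
    exacts [⟨0, zpow_zero _⟩, ⟨1, zpow_one _⟩]

theorem mem_res_singleton_iff {i : B} {c z : C} :
    z ∈ X.Res {i} c ↔ X.δ c z = 1 ∨ X.δ c z = cs.simple i :=
  mem_closure_simple_singleton_iff

theorem mem_res_singleton_symm {i : B} {c z : C} (h : z ∈ X.Res {i} c) : c ∈ X.Res {i} z := by
  rw [mem_res_singleton_iff] at h ⊢
  rw [X.delta_swap c z]
  rcases h with h | h <;> simp [h, cs.inv_simple]

theorem mem_res_singleton_trans {i : B} {x y z : C} (hy : y ∈ X.Res {i} x)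
    (hz : z ∈ X.Res {i} y) : z ∈ X.Res {i} x := by
  rw [mem_res_singleton_iff] at hy hz ⊢
  rcases hz with hz | hz
  · rwa [← (X.delta_eq_one_iff y z).1 hz]
  · rcases X.delta_mem_pair x y z i hz with h | h <;> rcases hy with hy | hy <;>
      simp [h, hy, cs.simple_mul_simple_self]

theorem res_singleton_eq_of_mem {i : B} {c u : C} (hu : u ∈ X.Res {i} c) :
    X.Res {i} u = X.Res {i} c := by
  ext z
  exact ⟨X.mem_res_singleton_trans hu, X.mem_res_singleton_trans (X.mem_res_singleton_symm hu)⟩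

theorem delta_eq_simple_of_mem_res {i : B} {c u v : C} (hu : u ∈ X.Res {i} c)
    (hv : v ∈ X.Res {i} c) (huv : u ≠ v) : X.δ u v = cs.simple i := by
  rw [← X.res_singleton_eq_of_mem hu, mem_res_singleton_iff] at hv
  exact hv.resolve_left fun h => huv ((X.delta_eq_one_iff u v).1 h)

theorem proj_eq_of_isProj {R : Set C} {z p : C} (h : X.IsProj R z p) : X.proj R z = p := by
  have hex : ∃ q, X.IsProj R z q := ⟨p, h⟩
  rw [proj, dif_pos hex]
  by_contra hne
  have := h.2 _ hex.choose_spec.1 hne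
  have := hex.choose_spec.2 _ h.1 (Ne.symm hne)
  omega

theorem delta_eq_mul_simple_of_mem_res {i : B} {c z g r : C} (hg : g ∈ X.Res {i} c)
    (hr : r ∈ X.Res {i} c) (hrg : r ≠ g)
    (hlen : cs.length (X.δ z g * cs.simple i) = cs.length (X.δ z g) + 1) :
    X.δ z r = X.δ z g * cs.simple i :=
  X.delta_eq_of_length z g r i (X.delta_eq_simple_of_mem_res hg hr hrg.symm) hlen

theorem proj_res_singleton_eq {i : B} {c z g : C} (hg : g ∈ X.Res {i} c)
    (hlen : cs.length (X.δ z g * cs.simple i) = cs.length (X.δ z g) + 1) :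
    X.proj (X.Res {i} c) z = g := by
  refine X.proj_eq_of_isProj ⟨hg, fun r hr hrg => ?_⟩
  rw [dist, dist, X.delta_eq_mul_simple_of_mem_res hg hr hrg hlen, hlen]
  exact Nat.lt_succ_self _

theorem exists_mem_res_length_mul_simple (i : B) (c z : C) :
    ∃ g ∈ X.Res {i} c, cs.length (X.δ z g * cs.simple i) = cs.length (X.δ z g) + 1 := by
  rcases cs.length_mul_simple (X.δ z c) i with hlen | hlen
  · exact ⟨c, X.mem_res_singleton_iff.2 (Or.inl (X.delta_self c)), hlen⟩
  · obtain ⟨g, hcg, hzg⟩ := X.exists_delta z c i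
    refine ⟨g, X.mem_res_singleton_iff.2 (Or.inr hcg), ?_⟩
    rw [hzg, cs.simple_mul_simple_cancel_right]
    omega

theorem proj_res_singleton_spec (i : B) (c z : C) :
    X.proj (X.Res {i} c) z ∈ X.Res {i} c ∧
      cs.length (X.δ z (X.proj (X.Res {i} c) z) * cs.simple i) =
        cs.length (X.δ z (X.proj (X.Res {i} c) z)) + 1 := by
  obtain ⟨g, hg, hlen⟩ := X.exists_mem_res_length_mul_simple i c z
  rw [X.proj_res_singleton_eq hg hlen]
  exact ⟨hg, hlen⟩

theorem delta_eq_delta_proj_mul_simple {i : B} {c z r : C} (hr : r ∈ X.Res {i} c)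
    (hrz : r ≠ X.proj (X.Res {i} c) z) :
    X.δ z r = X.δ z (X.proj (X.Res {i} c) z) * cs.simple i :=
  X.delta_eq_mul_simple_of_mem_res (X.proj_res_singleton_spec i c z).1 hr hrz
    (X.proj_res_singleton_spec i c z).2

section ParallelPanels

variable {i j : B} {c c' x y : C}

theorem length_delta_proj_of_ne {r : C} (hr : r ∈ X.Res {i} c)
    (hrx : r ≠ X.proj (X.Res {i} c) x) :
    cs.length (X.δ x r) = cs.length (X.δ x (X.proj (X.Res {i} c) x)) + 1 := by
  rw [X.delta_eq_delta_proj_mul_simple hr hrx, (X.proj_res_singleton_spec i c x).2]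

theorem delta_proj_eq_simple_mul (hx : x ∈ X.Res {j} c') (hy : y ∈ X.Res {j} c')
    (hxy : X.proj (X.Res {i} c) x ≠ X.proj (X.Res {i} c) y) :
    X.δ x (X.proj (X.Res {i} c) y) = cs.simple j * X.δ y (X.proj (X.Res {i} c) y) := by
  have hq := (X.proj_res_singleton_spec i c y).1
  have hxq := X.delta_eq_delta_proj_mul_simple hq hxy.symm
  have hyp := X.delta_eq_delta_proj_mul_simple (X.proj_res_singleton_spec i c x).1 hxy
  have hne : x ≠ y := by rintro rfl; exact hxy rfl
  refine (X.delta_mem_pair_left (X.delta_eq_simple_of_mem_res hx hy hne)).resolve_left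
    fun h => ?_
  set p := X.proj (X.Res {i} c) x
  set q := X.proj (X.Res {i} c) y
  -- `δ(y, p) = δ(x, p)`, although the gate property makes the first one two steps longer
  have : cs.length (X.δ x p) + 2 = cs.length (X.δ x p) := calc
    _ = cs.length (X.δ x q) + 1 := by rw [X.length_delta_proj_of_ne hq hxy.symm]
    _ = cs.length (X.δ y q * cs.simple i) := by rw [h, (X.proj_res_singleton_spec i c y).2]
    _ = cs.length (X.δ x p) := by rw [← h, hxq, cs.simple_mul_simple_cancel_right]
  omega

theorem length_simple_mul_delta_proj (hx : x ∈ X.Res {j} c') (hy : y ∈ X.Res {j} c')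
    (hxy : X.proj (X.Res {i} c) x ≠ X.proj (X.Res {i} c) y) :
    cs.length (cs.simple j * X.δ x (X.proj (X.Res {i} c) x)) =
        cs.length (X.δ x (X.proj (X.Res {i} c) x)) + 1 ∧
      cs.length (X.δ y (X.proj (X.Res {i} c) y)) =
        cs.length (X.δ x (X.proj (X.Res {i} c) x)) := by
  have hxq := X.length_delta_proj_of_ne (X.proj_res_singleton_spec i c y).1 hxy.symm
  have hyp := X.length_delta_proj_of_ne (X.proj_res_singleton_spec i c x).1 hxy
  rw [X.delta_proj_eq_simple_mul hx hy hxy] at hxq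
  rw [X.delta_proj_eq_simple_mul hy hx hxy.symm] at hyp
  have := cs.length_simple_mul (X.δ y (X.proj (X.Res {i} c) y)) j
  have := cs.length_simple_mul (X.δ x (X.proj (X.Res {i} c) x)) j
  omega

theorem proj_proj_eq_of_proj_ne (hx : x ∈ X.Res {j} c') (hy : y ∈ X.Res {j} c')
    (hxy : X.proj (X.Res {i} c) x ≠ X.proj (X.Res {i} c) y) :
    X.proj (X.Res {j} c') (X.proj (X.Res {i} c) x) = x := by
  apply X.proj_res_singleton_eq hx
  rw [X.delta_swap, ← cs.inv_simple j, ← mul_inv_rev, cs.length_inv, cs.length_inv]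
  exact (X.length_simple_mul_delta_proj hx hy hxy).1

theorem projSet_eq_of_proj_ne (hx : x ∈ X.Res {j} c') (hy : y ∈ X.Res {j} c')
    (hxy : X.proj (X.Res {i} c) x ≠ X.proj (X.Res {i} c) y) :
    X.projSet (X.Res {i} c) (X.Res {j} c') = X.Res {i} c := by
  refine subset_antisymm (Set.image_subset_iff.2 fun z _ => (X.proj_res_singleton_spec i c z).1)
    fun r hr => ?_
  by_cases hrp : r = X.proj (X.Res {i} c) x
  · exact ⟨x, hx, hrp.symm⟩
  obtain ⟨hlen, hlen'⟩ := X.length_simple_mul_delta_proj hx hy hxy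
  have hq := (X.proj_res_singleton_spec i c y).1
  obtain ⟨z, hxz, hrz⟩ := X.exists_delta r x j
  refine ⟨z, ?_, X.proj_res_singleton_eq hr ?_⟩
  · rw [← X.res_singleton_eq_of_mem hx]
    exact X.mem_res_singleton_iff.2 (Or.inr hxz)
  -- `δ(z, r) = s_j δ(x, r) = s_j δ(x, q) = δ(y, q)`, while `δ(z, r) s_i = s_j δ(x, p)`
  have hzr : X.δ z r = cs.simple j * X.δ x r := by
    rw [X.delta_swap r z, hrz, mul_inv_rev, cs.inv_simple, X.delta_swap x r, inv_inv]
  have hyq : X.δ z r = X.δ y (X.proj (X.Res {i} c) y) := by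
    rw [hzr, X.delta_eq_delta_proj_mul_simple hr hrp,
      ← X.delta_eq_delta_proj_mul_simple hq (Ne.symm hxy), X.delta_proj_eq_simple_mul hx hy hxy,
      cs.simple_mul_simple_cancel_left]
  rw [hyq, hlen', ← hyq, hzr, X.delta_eq_delta_proj_mul_simple hr hrp, ← mul_assoc,
    cs.simple_mul_simple_cancel_right, hlen]

end ParallelPanels

end RAB.Building

theorem statement5_general {B W C : Type*} [Group W] {M : CoxeterMatrix B}
    (cs : CoxeterSystem M W) (X : RAB.Building cs C)
    (σ σ' : Set C) (hσ : X.IsPanel σ) (hσ' : X.IsPanel σ')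
    (x y : C) (hx : x ∈ σ') (hy : y ∈ σ') (hxy : X.proj σ x ≠ X.proj σ y) :
    X.Parallel σ σ' := by
  obtain ⟨i, c, rfl⟩ := hσ
  obtain ⟨j, c', rfl⟩ := hσ'
  have hx' := X.proj_proj_eq_of_proj_ne hx hy hxy
  have hy' := X.proj_proj_eq_of_proj_ne hy hx hxy.symm
  refine ⟨X.projSet_eq_of_proj_ne hx hy hxy, X.projSet_eq_of_proj_ne
    (X.proj_res_singleton_spec i c x).1 (X.proj_res_singleton_spec i c y).1 ?_⟩
  rw [hx', hy']
  rintro rfl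
  exact hxy rfl

/-- If two chambers of a panel `σ'` have distinct projections on a panel
`σ`, then `σ` and `σ'` are parallel. -/
theorem statement5 {B W C : Type*} [Fintype B] [Group W] {M : CoxeterMatrix B}
    (cs : CoxeterSystem M W) (X : RAB.Building cs C)
    (σ σ' : Set C) (hσ : X.IsPanel σ) (hσ' : X.IsPanel σ')
    (x y : C) (hx : x ∈ σ') (hy : y ∈ σ') (hxy : X.proj σ x ≠ X.proj σ y) :
    X.Parallel σ σ' :=
  statement5_general cs X σ σ' hσ hσ' x y hx hy hxy
end
end

section
/- Let C be a set and let G be a subgroup of Sym(C). Let Y ⊆ C and let V be a subgroup of G each of whose elements fixes every point of C \ Y. Let a, b ∈ G be such that Y ∩ a(Y) = ∅ and Y ∩ b(Y) = ∅. If [a,v] commutes with [b,w] for all v, w ∈ V, then V is abelian. -/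
/-!
On `Y` the commutator `⁅a, v⁆ = a v a⁻¹ v⁻¹` acts as `v⁻¹`, since `a⁻¹` moves `Y` off itself,
into the region where `v` is the identity. Hence `⁅a, v⁆ ⁅b, w⁆` and `⁅b, w⁆ ⁅a, v⁆` agree with
`v⁻¹ w⁻¹` and `w⁻¹ v⁻¹` on `Y`, and off `Y` both of these are the identity.
-/

open scoped commutatorElement

namespace Equiv.Perm

variable {C : Type*} {Y : Set C} {a b v w : Perm C}

theorem mapsTo_of_forall_notMem_apply_eq (hv : ∀ x ∉ Y, v x = x) : Set.MapsTo v Y Y :=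
  fun x hx => by_contra fun h => h (by rwa [v.injective (hv _ h)])

theorem inv_apply_eq_of_forall_notMem_apply_eq (hv : ∀ x ∉ Y, v x = x) :
    ∀ x ∉ Y, v⁻¹ x = x :=
  fun x hx => inv_eq_iff_eq.mpr (hv x hx).symm

theorem commutatorElement_apply_of_disjoint (hv : ∀ x ∉ Y, v x = x)
    (ha : _root_.Disjoint Y (a '' Y)) {x : C} (hx : x ∈ Y) : ⁅a, v⁆ x = v⁻¹ x := by
  have hy : v⁻¹ x ∈ Y := mapsTo_of_forall_notMem_apply_eq
    (inv_apply_eq_of_forall_notMem_apply_eq hv) hx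
  have hay : a⁻¹ (v⁻¹ x) ∉ Y := fun h =>
    Set.disjoint_left.mp ha hy ⟨_, h, a.apply_symm_apply _⟩
  simp only [commutatorElement_def, mul_apply]
  rw [hv _ hay]
  exact a.apply_symm_apply _

theorem commute_of_commute_commutatorElement (hv : ∀ x ∉ Y, v x = x)
    (hw : ∀ x ∉ Y, w x = x) (ha : _root_.Disjoint Y (a '' Y)) (hb : _root_.Disjoint Y (b '' Y))
    (h : Commute ⁅a, v⁆ ⁅b, w⁆) : Commute v w := by
  have hv' := inv_apply_eq_of_forall_notMem_apply_eq hv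
  have hw' := inv_apply_eq_of_forall_notMem_apply_eq hw
  rw [← Commute.inv_inv_iff]
  refine Equiv.ext fun x => ?_
  by_cases hx : x ∈ Y
  · have hvx : v⁻¹ x ∈ Y := mapsTo_of_forall_notMem_apply_eq hv' hx
    have hwx : w⁻¹ x ∈ Y := mapsTo_of_forall_notMem_apply_eq hw' hx
    have hx' := congrArg (· x) h.eq
    simp only [mul_apply] at hx' ⊢
    rwa [commutatorElement_apply_of_disjoint hw hb hx,
      commutatorElement_apply_of_disjoint hv ha hwx,
      commutatorElement_apply_of_disjoint hv ha hx,
      commutatorElement_apply_of_disjoint hw hb hvx] at hx'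
  · simp [mul_apply, hv' x hx, hw' x hx]

end Equiv.Perm

theorem statement19_general {C : Type*} (Y : Set C)
    (V : Subgroup (Equiv.Perm C))
    (hsupp : ∀ v ∈ V, ∀ x ∉ Y, v x = x)
    (a b : Equiv.Perm C)
    (haY : Y ∩ (⇑a '' Y) = ∅) (hbY : Y ∩ (⇑b '' Y) = ∅)
    (hcomm : ∀ v ∈ V, ∀ w ∈ V, Commute ⁅a, v⁆ ⁅b, w⁆) :
    ∀ v ∈ V, ∀ w ∈ V, v * w = w * v :=
  fun v hv w hw => (Equiv.Perm.commute_of_commute_commutatorElement (hsupp v hv) (hsupp w hw)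
    (Set.disjoint_iff_inter_eq_empty.mpr haY) (Set.disjoint_iff_inter_eq_empty.mpr hbY)
    (hcomm v hv w hw)).eq

/-- If `V` is supported on `Y`, the elements `a, b` move `Y` off itself
and all commutators `[a,v]`, `[b,w]` (`v, w ∈ V`) commute, then `V` is abelian. -/
theorem statement19 {C : Type*} (G : Subgroup (Equiv.Perm C)) (Y : Set C)
    (V : Subgroup (Equiv.Perm C)) (hVG : V ≤ G)
    (hsupp : ∀ v ∈ V, ∀ x ∉ Y, v x = x)
    (a b : Equiv.Perm C) (ha : a ∈ G) (hb : b ∈ G)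
    (haY : Y ∩ (⇑a '' Y) = ∅) (hbY : Y ∩ (⇑b '' Y) = ∅)
    (hcomm : ∀ v ∈ V, ∀ w ∈ V, Commute ⁅a, v⁆ ⁅b, w⁆) :
    ∀ v ∈ V, ∀ w ∈ V, v * w = w * v :=
  statement19_general Y V hsupp a b haY hbY hcomm
end
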